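/- arXiv:2605.20711 — 4 statements merged into one kernel-verified Lean document; each statement's English description precedes it below -/
import Mathlib

section
/- Let S ⊆ ℝ^{m₁} × ℝ^{m₂} be nonempty, and for σ = (σ₁,σ₂) with σ₁,σ₂ > 0 suppose (s̄₁(σ), s̄₂(σ)) minimizes (s₁,s₂) ↦ (σ₁/2)‖s₁‖² + (σ₂/2)‖s₂‖² over S. Let σ = (σ₁,σ₂) and σ' = (σ₁',σ₂') with η = σ₁/σ₂ ≤ η' = σ₁'/σ₂'. If the minimizers are unique, then ‖s̄₁(σ')‖ ≤ ‖s̄₁(σ)‖ and ‖s̄₂(σ)‖ ≤ ‖s̄₂(σ')‖. -/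
/-- monotonicity of component norms of weighted least-norm minimizers
with respect to the weight ratio. -/
theorem stmt_6 (m₁ m₂ : ℕ)
    (S : Set (EuclideanSpace ℝ (Fin m₁) × EuclideanSpace ℝ (Fin m₂))) (hS : S.Nonempty)
    (σ₁ σ₂ σ₁' σ₂' : ℝ) (h1 : 0 < σ₁) (h2 : 0 < σ₂) (h1' : 0 < σ₁') (h2' : 0 < σ₂')
    (hη : σ₁ / σ₂ ≤ σ₁' / σ₂')
    (p p' : EuclideanSpace ℝ (Fin m₁) × EuclideanSpace ℝ (Fin m₂))
    (hp : p ∈ S) (hp' : p' ∈ S)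
    (hpmin : ∀ q ∈ S,
      σ₁/2 * ‖p.1‖^2 + σ₂/2 * ‖p.2‖^2 ≤ σ₁/2 * ‖q.1‖^2 + σ₂/2 * ‖q.2‖^2)
    (hp'min : ∀ q ∈ S,
      σ₁'/2 * ‖p'.1‖^2 + σ₂'/2 * ‖p'.2‖^2 ≤ σ₁'/2 * ‖q.1‖^2 + σ₂'/2 * ‖q.2‖^2)
    (hpuniq : ∀ q ∈ S,
      (∀ r ∈ S, σ₁/2 * ‖q.1‖^2 + σ₂/2 * ‖q.2‖^2 ≤ σ₁/2 * ‖r.1‖^2 + σ₂/2 * ‖r.2‖^2) → q = p)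
    (hp'uniq : ∀ q ∈ S,
      (∀ r ∈ S, σ₁'/2 * ‖q.1‖^2 + σ₂'/2 * ‖q.2‖^2 ≤ σ₁'/2 * ‖r.1‖^2 + σ₂'/2 * ‖r.2‖^2) → q = p') :
    ‖p'.1‖ ≤ ‖p.1‖ ∧ ‖p.2‖ ≤ ‖p'.2‖ := by
  have hA := hpmin p' hp'
  have hB := hp'min p hp
  rcases eq_or_lt_of_le hη with heq | hlt
  · -- equal ratios: p' is also a minimizer for σ, so p' = p
    have hratio : σ₁ * σ₂' = σ₁' * σ₂ := by
      field_simp at heq; linarith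
    have hpp : p' = p := by
      apply hpuniq p' hp'
      intro r hr
      have hr' := hp'min r hr
      nlinarith [mul_le_mul_of_nonneg_left hr' h2.le]
    rw [hpp]
    exact ⟨le_refl _, le_refl _⟩
  · have hlt' : σ₁ * σ₂' < σ₁' * σ₂ := (div_lt_div_iff₀ h2 h2').mp hlt
    have h1sq : ‖p'.1‖^2 ≤ ‖p.1‖^2 := by
      nlinarith [mul_le_mul_of_nonneg_left hA h2'.le,
        mul_le_mul_of_nonneg_left hB h2.le]
    have h2sq : ‖p.2‖^2 ≤ ‖p'.2‖^2 := by nlinarith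
    constructor
    · nlinarith [norm_nonneg p'.1, norm_nonneg p.1]
    · nlinarith [norm_nonneg p.2, norm_nonneg p'.2]
end

section
/- Let S ⊆ ℝ^{m₁} × ℝ^{m₂} be nonempty and closed. Define B = argmin{(1/2)‖s₁‖² : (s₁,s₂) ∈ S} and A = argmin{(1/2)‖s₂‖² : (s₁,s₂) ∈ B}, and assume A contains a point (s₁*, s₂*). Let {σ⁽ᵏ⁾} = {(σ₁⁽ᵏ⁾, σ₂⁽ᵏ⁾)} ⊂ ℝ²₊₊ satisfy σ₁⁽ᵏ⁾/σ₂⁽ᵏ⁾ → ∞ monotonically, and let s̄⁽ᵏ⁾ be a minimizer of (σ₁⁽ᵏ⁾/2)‖s₁‖² + (σ₂⁽ᵏ⁾/2)‖s₂‖² over S. If the sequence {s̄⁽ᵏ⁾} is bounded, then every accumulation point of {s̄⁽ᵏ⁾} lies in A. -/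
/-- accumulation points of weighted least-norm minimizers with weight ratio
tending to infinity lie in the hierarchical argmin set A. -/
theorem stmt_7 (m₁ m₂ : ℕ)
    (S : Set (EuclideanSpace ℝ (Fin m₁) × EuclideanSpace ℝ (Fin m₂)))
    (hSne : S.Nonempty) (hclosed : IsClosed S)
    (B : Set (EuclideanSpace ℝ (Fin m₁) × EuclideanSpace ℝ (Fin m₂)))
    (hB : B = {p ∈ S | ∀ q ∈ S, (1/2) * ‖p.1‖^2 ≤ (1/2) * ‖q.1‖^2})
    (Aset : Set (EuclideanSpace ℝ (Fin m₁) × EuclideanSpace ℝ (Fin m₂)))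
    (hA : Aset = {p ∈ B | ∀ q ∈ B, (1/2) * ‖p.2‖^2 ≤ (1/2) * ‖q.2‖^2})
    (hAne : Aset.Nonempty)
    (σ₁ σ₂ : ℕ → ℝ) (hσ₁ : ∀ k, 0 < σ₁ k) (hσ₂ : ∀ k, 0 < σ₂ k)
    (hmono : ∀ k, σ₁ k / σ₂ k ≤ σ₁ (k+1) / σ₂ (k+1))
    (hdiv : Filter.Tendsto (fun k => σ₁ k / σ₂ k) Filter.atTop Filter.atTop)
    (sb : ℕ → EuclideanSpace ℝ (Fin m₁) × EuclideanSpace ℝ (Fin m₂))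
    (hsbS : ∀ k, sb k ∈ S)
    (hsbmin : ∀ k, ∀ q ∈ S,
      σ₁ k/2 * ‖(sb k).1‖^2 + σ₂ k/2 * ‖(sb k).2‖^2
        ≤ σ₁ k/2 * ‖q.1‖^2 + σ₂ k/2 * ‖q.2‖^2)
    (hbdd : ∃ R, ∀ k, ‖sb k‖ ≤ R) :
    ∀ p, (∃ φ : ℕ → ℕ, StrictMono φ ∧
        Filter.Tendsto (sb ∘ φ) Filter.atTop (nhds p)) → p ∈ Aset := by
  rintro p ⟨φ, hφ, hlim⟩
  obtain ⟨a, haA⟩ := hAne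
  rw [hA] at haA
  obtain ⟨haB, haA2⟩ := haA
  have haB' := haB
  rw [hB] at haB'
  obtain ⟨haS, haB1⟩ := haB'
  -- basic inequalities for each k
  have key1 : ∀ k, ‖a.1‖^2 ≤ ‖(sb k).1‖^2 := by
    intro k
    have := haB1 (sb k) (hsbS k)
    linarith
  have key2 : ∀ k, ‖(sb k).2‖^2 ≤ ‖a.2‖^2 := by
    intro k
    have h := hsbmin k a haS
    have h1 := key1 k
    have h2 := hσ₁ k
    have h3 := hσ₂ k
    nlinarith
  have key3 : ∀ k, ‖(sb k).1‖^2 - ‖a.1‖^2 ≤ ‖a.2‖^2 / (σ₁ k / σ₂ k) := by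
    intro k
    have h := hsbmin k a haS
    have h2 := hσ₁ k
    have h3 := hσ₂ k
    have hr : 0 < σ₁ k / σ₂ k := div_pos h2 h3
    rw [le_div_iff₀ hr, ← mul_div_assoc, div_le_iff₀ h3]
    nlinarith [sq_nonneg ‖(sb k).2‖]
  -- p ∈ S
  have hpS : p ∈ S := hclosed.mem_of_tendsto hlim
    (Filter.Eventually.of_forall fun k => hsbS (φ k))
  -- limits of norms
  have h1lim : Filter.Tendsto (fun k => ‖(sb (φ k)).1‖^2) Filter.atTop (nhds (‖p.1‖^2)) := by
    have : Filter.Tendsto (fun k => (sb ∘ φ) k) Filter.atTop (nhds p) := hlim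
    exact ((((continuous_fst.tendsto p).comp hlim)).norm).pow 2
  have h2lim : Filter.Tendsto (fun k => ‖(sb (φ k)).2‖^2) Filter.atTop (nhds (‖p.2‖^2)) := by
    have : Filter.Tendsto (fun k => (sb ∘ φ) k) Filter.atTop (nhds p) := hlim
    exact ((((continuous_snd.tendsto p).comp hlim)).norm).pow 2
  -- ratio along subsequence tends to infinity
  have hrφ : Filter.Tendsto (fun k => σ₁ (φ k) / σ₂ (φ k)) Filter.atTop Filter.atTop :=
    hdiv.comp hφ.tendsto_atTop
  have hz : Filter.Tendsto (fun k => ‖a.2‖^2 / (σ₁ (φ k) / σ₂ (φ k))) Filter.atTop (nhds 0) :=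
    Filter.Tendsto.div_atTop tendsto_const_nhds hrφ
  -- squeeze: ‖(sb (φ k)).1‖² - ‖a.1‖² → 0
  have hsq : Filter.Tendsto (fun k => ‖(sb (φ k)).1‖^2 - ‖a.1‖^2) Filter.atTop (nhds 0) := by
    refine tendsto_of_tendsto_of_tendsto_of_le_of_le tendsto_const_nhds hz ?_ ?_
    · intro k; simpa using key1 (φ k)
    · intro k; exact key3 (φ k)
  have heq : ‖p.1‖^2 = ‖a.1‖^2 := by
    have h := hsq.add (tendsto_const_nhds (x := ‖a.1‖^2))
    simp only [sub_add_cancel, zero_add] at h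
    exact tendsto_nhds_unique h1lim h
  have hle2 : ‖p.2‖^2 ≤ ‖a.2‖^2 :=
    le_of_tendsto h2lim (Filter.Eventually.of_forall fun k => key2 (φ k))
  -- conclude
  have hpB : p ∈ B := by
    rw [hB]
    refine ⟨hpS, fun q hq => ?_⟩
    have := haB1 q hq
    rw [heq]
    linarith
  rw [hA]
  refine ⟨hpB, fun q hq => ?_⟩
  have := haA2 q hq
  linarith
end

section
/- Let S ⊆ ℝ^{m₁} × ℝ^{m₂} be a nonempty closed convex set such that A = argmin{‖s₂‖ : (s₁,s₂) ∈ argmin{‖s₁‖ : (s₁,s₂) ∈ S}} is a singleton {(s₁*,s₂*)}. Let {η⁽ᵏ⁾} be a nondecreasing positive sequence with η⁽ᵏ⁾ → ∞, and let s̄⁽ᵏ⁾ = (s̄₁⁽ᵏ⁾, s̄₂⁽ᵏ⁾) be the unique minimizer of η⁽ᵏ⁾‖s₁‖² + ‖s₂‖² over S. Then s̄₁⁽ᵏ⁾ → s₁* and s̄₂⁽ᵏ⁾ → s₂* as k → ∞. -/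
open Filter Topology

/-- convergence of weighted least-norm minimizers to the hierarchical
least-norm point when the weight ratio tends to infinity. -/
theorem stmt_8 (m₁ m₂ : ℕ)
    (S : Set (EuclideanSpace ℝ (Fin m₁) × EuclideanSpace ℝ (Fin m₂)))
    (hSne : S.Nonempty) (hclosed : IsClosed S) (hconv : Convex ℝ S)
    (sstar : EuclideanSpace ℝ (Fin m₁) × EuclideanSpace ℝ (Fin m₂))
    (hAstar : {p ∈ {p ∈ S | ∀ q ∈ S, ‖p.1‖ ≤ ‖q.1‖} |
        ∀ q ∈ {p ∈ S | ∀ q ∈ S, ‖p.1‖ ≤ ‖q.1‖}, ‖p.2‖ ≤ ‖q.2‖} = {sstar})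
    (η : ℕ → ℝ) (hηpos : ∀ k, 0 < η k) (hηmono : Monotone η)
    (hηdiv : Filter.Tendsto η Filter.atTop Filter.atTop)
    (sb : ℕ → EuclideanSpace ℝ (Fin m₁) × EuclideanSpace ℝ (Fin m₂))
    (hsbS : ∀ k, sb k ∈ S)
    (hsbmin : ∀ k, ∀ q ∈ S,
      η k * ‖(sb k).1‖^2 + ‖(sb k).2‖^2 ≤ η k * ‖q.1‖^2 + ‖q.2‖^2)
    (hsbuniq : ∀ k, ∀ q ∈ S,
      (∀ r ∈ S, η k * ‖q.1‖^2 + ‖q.2‖^2 ≤ η k * ‖r.1‖^2 + ‖r.2‖^2) → q = sb k) :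
    Filter.Tendsto sb Filter.atTop (nhds sstar) := by
  -- extract properties of sstar
  have hs : sstar ∈ ({p ∈ {p ∈ S | ∀ q ∈ S, ‖p.1‖ ≤ ‖q.1‖} |
      ∀ q ∈ {p ∈ S | ∀ q ∈ S, ‖p.1‖ ≤ ‖q.1‖}, ‖p.2‖ ≤ ‖q.2‖} :
      Set (EuclideanSpace ℝ (Fin m₁) × EuclideanSpace ℝ (Fin m₂))) := by
    rw [hAstar]; exact rfl
  obtain ⟨⟨hsS, h1⟩, h2⟩ := hs
  have key : ∀ k, η k * ‖(sb k).1‖^2 + ‖(sb k).2‖^2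
      ≤ η k * ‖sstar.1‖^2 + ‖sstar.2‖^2 := fun k => hsbmin k sstar hsS
  have hmin1 : ∀ k, ‖sstar.1‖ ≤ ‖(sb k).1‖ := fun k => h1 _ (hsbS k)
  -- bound on second component
  have hb2 : ∀ k, ‖(sb k).2‖ ≤ ‖sstar.2‖ := by
    intro k
    have h := key k
    have h' : η k * ‖sstar.1‖^2 ≤ η k * ‖(sb k).1‖^2 :=
      mul_le_mul_of_nonneg_left
        (pow_le_pow_left₀ (norm_nonneg _) (hmin1 k) 2) (hηpos k).le
    have hsq : ‖(sb k).2‖^2 ≤ ‖sstar.2‖^2 := by nlinarith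
    exact (pow_le_pow_iff_left₀ (norm_nonneg _) (norm_nonneg _) two_ne_zero).mp hsq
  -- bound on first component
  have hb1 : ∀ k, ‖(sb k).1‖^2 ≤ ‖sstar.1‖^2 + ‖sstar.2‖^2 / η k := by
    intro k
    have h := key k
    have hη := hηpos k
    rw [← mul_le_mul_iff_right₀ hη, mul_add, mul_div_cancel₀ _ hη.ne']
    nlinarith [sq_nonneg ‖(sb k).2‖]
  -- uniform bound on first component
  set C : ℝ := ‖sstar.1‖^2 + ‖sstar.2‖^2 / η 0 with hC
  have hb1' : ∀ k, ‖(sb k).1‖ ≤ Real.sqrt C := by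
    intro k
    rw [show ‖(sb k).1‖ = Real.sqrt (‖(sb k).1‖^2) by
      rw [Real.sqrt_sq (norm_nonneg _)]]
    apply Real.sqrt_le_sqrt
    refine (hb1 k).trans (add_le_add_right ?_ _)
    exact div_le_div_of_nonneg_left (sq_nonneg _) (hηpos 0) (hηmono (Nat.zero_le k))
  -- the sequence lies in a compact ball
  set R : ℝ := max (Real.sqrt C) ‖sstar.2‖ with hR
  have hball : ∀ k, sb k ∈ Metric.closedBall
      (0 : EuclideanSpace ℝ (Fin m₁) × EuclideanSpace ℝ (Fin m₂)) R := by
    intro k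
    rw [Metric.mem_closedBall, dist_zero_right, Prod.norm_def]
    exact max_le_max (hb1' k) (hb2 k)
  have hcpt : IsCompact (Metric.closedBall
      (0 : EuclideanSpace ℝ (Fin m₁) × EuclideanSpace ℝ (Fin m₂)) R) :=
    isCompact_closedBall _ _
  -- subsequence argument
  apply tendsto_of_subseq_tendsto
  intro ns hns
  obtain ⟨p, -, ms, hms, htend⟩ :=
    hcpt.tendsto_subseq (x := fun n => sb (ns n)) (fun n => hball (ns n))
  refine ⟨ms, ?_⟩
  have htend' : Tendsto (fun n => sb (ns (ms n))) atTop (𝓝 p) := htend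
  suffices hps : p = sstar by rwa [hps] at htend'
  have hpS : p ∈ S := hclosed.mem_of_tendsto htend'
    (Eventually.of_forall fun n => hsbS _)
  have htend1 : Tendsto (fun n => ‖(sb (ns (ms n))).1‖) atTop (𝓝 ‖p.1‖) :=
    ((continuous_fst.tendsto p).comp htend').norm
  have htend2 : Tendsto (fun n => ‖(sb (ns (ms n))).2‖) atTop (𝓝 ‖p.2‖) :=
    ((continuous_snd.tendsto p).comp htend').norm
  have hηt : Tendsto (fun n => η (ns (ms n))) atTop atTop :=
    hηdiv.comp (hns.comp hms.tendsto_atTop)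
  have hz : Tendsto (fun n => ‖sstar.2‖^2 / η (ns (ms n))) atTop (𝓝 0) :=
    tendsto_const_nhds.div_atTop hηt
  have hp1sq : ‖p.1‖^2 ≤ ‖sstar.1‖^2 := by
    simpa using le_of_tendsto_of_tendsto' (htend1.pow 2)
      (tendsto_const_nhds.add hz) (fun n => hb1 _)
  have hp1 : ‖p.1‖ ≤ ‖sstar.1‖ :=
    (pow_le_pow_iff_left₀ (norm_nonneg _) (norm_nonneg _) two_ne_zero).mp hp1sq
  have hp2 : ‖p.2‖ ≤ ‖sstar.2‖ :=
    le_of_tendsto htend2 (Eventually.of_forall fun n => hb2 _)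
  have hpA : p ∈ ({sstar} : Set (EuclideanSpace ℝ (Fin m₁) × EuclideanSpace ℝ (Fin m₂))) := by
    rw [← hAstar]
    exact ⟨⟨hpS, fun q hq => hp1.trans (h1 q hq)⟩, fun q hq => hp2.trans (h2 q hq)⟩
  exact hpA
end

section
/- Let f : ℝⁿ → ℝ ∪ {+∞} be closed proper convex with an affine minorant, A an m×n matrix, b ∈ ℝᵐ, and let sequences x⁽ᵏ⁾ ∈ dom f (bounded along a subsequence K), shifts s̄⁽ᵏ⁾ → s* , multipliers λ̂⁽ᵏ⁾ bounded, ε⁽ᵏ⁾ → 0, ρ⁽ᵏ⁾ → ∞, and a bounded sequence c⁽ᵏ⁾ ∈ ℝ satisfy f(x⁽ᵏ⁾) + (λ̂⁽ᵏ⁻¹⁾)ᵀ(Ax⁽ᵏ⁾ - b + s̄⁽ᵏ⁻¹⁾) + (ρ⁽ᵏ⁻¹⁾/2)‖Ax⁽ᵏ⁾ - b + s̄⁽ᵏ⁻¹⁾‖² ≤ c⁽ᵏ⁻¹⁾ + ε⁽ᵏ⁻¹⁾ for all k. Then ‖Ax⁽ᵏ⁾ - b + s̄⁽ᵏ⁻¹⁾‖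 → 0 along K, so every accumulation point x* of {x⁽ᵏ⁾}_{k∈K} satisfies Ax* - b + s* = 0. -/
/-- with diverging penalty parameters, bounded multipliers and bounded
objective terms, the constraint residual vanishes along the bounded subsequence, so every
accumulation point is feasible for the shifted constraints. -/
theorem stmt_19 (n m : ℕ)
    (f : EuclideanSpace ℝ (Fin n) → EReal)
    (hlsc : LowerSemicontinuous f)
    (hp1 : ∀ x, f x ≠ ⊥) (hp2 : ∃ x, f x ≠ ⊤)
    (hconv : Convex ℝ {p : EuclideanSpace ℝ (Fin n) × ℝ | f p.1 ≤ (p.2 : EReal)})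
    (hminorant : ∃ α : EuclideanSpace ℝ (Fin n), ∃ β : ℝ,
      ∀ x, (((inner ℝ α x : ℝ) + β : ℝ) : EReal) ≤ f x)
    (A : EuclideanSpace ℝ (Fin n) →ₗ[ℝ] EuclideanSpace ℝ (Fin m))
    (b : EuclideanSpace ℝ (Fin m))
    (x : ℕ → EuclideanSpace ℝ (Fin n))
    (hxdom : ∀ k, f (x k) ≠ ⊤)
    (φ : ℕ → ℕ) (hφ : StrictMono φ)
    (hxbdd : ∃ R, ∀ j, ‖x (φ j + 1)‖ ≤ R)
    (sbar : ℕ → EuclideanSpace ℝ (Fin m)) (sstar : EuclideanSpace ℝ (Fin m))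
    (hsbar : Filter.Tendsto sbar Filter.atTop (nhds sstar))
    (lamh : ℕ → EuclideanSpace ℝ (Fin m)) (hlam : ∃ L, ∀ k, ‖lamh k‖ ≤ L)
    (ε : ℕ → ℝ) (hε : Filter.Tendsto ε Filter.atTop (nhds 0))
    (ρ : ℕ → ℝ) (hρpos : ∀ k, 0 < ρ k)
    (hρdiv : Filter.Tendsto ρ Filter.atTop Filter.atTop)
    (c : ℕ → ℝ) (hc : ∃ Cb, ∀ k, |c k| ≤ Cb)
    (hineq : ∀ k, f (x (k+1)) +
        (((inner ℝ (lamh k) (A (x (k+1)) - b + sbar k) : ℝ)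
          + (ρ k / 2) * ‖A (x (k+1)) - b + sbar k‖^2 : ℝ) : EReal)
      ≤ ((c k + ε k : ℝ) : EReal)) :
    Filter.Tendsto (fun j => ‖A (x (φ j + 1)) - b + sbar (φ j)‖) Filter.atTop (nhds 0) ∧
    ∀ xs : EuclideanSpace ℝ (Fin n), ∀ ψ : ℕ → ℕ, StrictMono ψ →
      Filter.Tendsto (fun j => x (φ (ψ j) + 1)) Filter.atTop (nhds xs) →
      A xs - b + sstar = 0 := by
  obtain ⟨R, hR⟩ := hxbdd
  obtain ⟨L, hL⟩ := hlam
  obtain ⟨Cb, hCb⟩ := hc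
  obtain ⟨α, β, hαβ⟩ := hminorant
  have hL0 : 0 ≤ L := le_trans (norm_nonneg _) (hL 0)
  set r : ℕ → EuclideanSpace ℝ (Fin m) := fun k => A (x (k+1)) - b + sbar k with hr
  -- basic real inequality extracted from the EReal hypothesis
  have hk : ∀ k, (f (x (k+1))).toReal
      + ((inner ℝ (lamh k) (r k) : ℝ) + (ρ k / 2) * ‖r k‖^2) ≤ c k + ε k := by
    intro k
    have h1 := hineq k
    rw [← EReal.coe_toReal (hxdom (k+1)) (hp1 (x (k+1))), ← EReal.coe_add,
      EReal.coe_le_coe_iff] at h1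
    exact h1
  -- affine minorant gives a lower bound on toReal of f
  have hF : ∀ k, -(‖α‖ * ‖x k‖) + β ≤ (f (x k)).toReal := by
    intro k
    have h1 := hαβ (x k)
    rw [← EReal.coe_toReal (hxdom k) (hp1 (x k)), EReal.coe_le_coe_iff] at h1
    have h2 := abs_real_inner_le_norm α (x k)
    have h3 := neg_abs_le (inner ℝ α (x k) : ℝ)
    linarith
  set C : ℝ := 4 * (Cb + 1 + ‖α‖ * R - β + L ^ 2) with hC
  have hρφ : Filter.Tendsto (fun j => ρ (φ j)) Filter.atTop Filter.atTop :=
    hρdiv.comp hφ.tendsto_atTop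
  have hub : ∀ᶠ j in Filter.atTop, ‖r (φ j)‖ ^ 2 ≤ C / ρ (φ j) := by
    have h1 : ∀ᶠ j in Filter.atTop, 1 ≤ ρ (φ j) := hρφ.eventually_ge_atTop 1
    have h2 : ∀ᶠ k in Filter.atTop, ε k ≤ 1 := by
      have := hε.eventually (eventually_le_nhds (show (0:ℝ) < 1 by norm_num))
      exact this
    have h2' : ∀ᶠ j in Filter.atTop, ε (φ j) ≤ 1 := hφ.tendsto_atTop.eventually h2
    filter_upwards [h1, h2'] with j hj1 hj2
    set t := ‖r (φ j)‖ with ht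
    have htk := hk (φ j)
    have hFk := hF (φ j + 1)
    have hx := hR j
    have hα0 : (0:ℝ) ≤ ‖α‖ := norm_nonneg _
    have ht0 : (0:ℝ) ≤ t := norm_nonneg _
    have hstepA : -(‖α‖ * R) + β ≤ (f (x (φ j + 1))).toReal := by nlinarith
    have hin : -(L * t) ≤ (inner ℝ (lamh (φ j)) (r (φ j)) : ℝ) := by
      have h4 := abs_real_inner_le_norm (lamh (φ j)) (r (φ j))
      have h5 := neg_abs_le (inner ℝ (lamh (φ j)) (r (φ j)) : ℝ)
      have h6 := hL (φ j)
      nlinarith [norm_nonneg (lamh (φ j))]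
    have hcB : c (φ j) ≤ Cb := le_of_abs_le (hCb (φ j))
    have hstepB : (ρ (φ j) / 2) * t ^ 2 ≤ (Cb + 1 + ‖α‖ * R - β) + L * t := by
      linarith
    have hstepC : 2 * (L * t) ≤ (ρ (φ j) / 2) * t ^ 2 + 2 * L ^ 2 := by
      nlinarith [sq_nonneg (ρ (φ j) * t - 2 * L), sq_nonneg L, sq_nonneg t, hρpos (φ j)]
    rw [le_div_iff₀ (hρpos (φ j)), mul_comm]
    nlinarith
  have hCdiv : Filter.Tendsto (fun j => C / ρ (φ j)) Filter.atTop (nhds 0) :=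
    Filter.Tendsto.div_atTop tendsto_const_nhds hρφ
  have hsq : Filter.Tendsto (fun j => ‖r (φ j)‖ ^ 2) Filter.atTop (nhds 0) :=
    tendsto_of_tendsto_of_tendsto_of_le_of_le' tendsto_const_nhds hCdiv
      (Filter.Eventually.of_forall fun j => sq_nonneg _) hub
  have hpart1 : Filter.Tendsto (fun j => ‖r (φ j)‖) Filter.atTop (nhds 0) := by
    have h7 : Filter.Tendsto (fun j => Real.sqrt (‖r (φ j)‖ ^ 2)) Filter.atTop
        (nhds (Real.sqrt 0)) := (Real.continuous_sqrt.tendsto 0).comp hsq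
    simpa [Real.sqrt_sq (norm_nonneg _)] using h7
  refine ⟨hpart1, ?_⟩
  intro xs ψ hψ hconv2
  have hA : Continuous A := A.continuous_of_finiteDimensional
  have hAx : Filter.Tendsto (fun j => A (x (φ (ψ j) + 1))) Filter.atTop (nhds (A xs)) :=
    (hA.tendsto xs).comp hconv2
  have hs : Filter.Tendsto (fun j => sbar (φ (ψ j))) Filter.atTop (nhds sstar) :=
    hsbar.comp ((hφ.comp hψ).tendsto_atTop)
  have h1 : Filter.Tendsto (fun j => r (φ (ψ j))) Filter.atTop (nhds (A xs - b + sstar)) :=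
    (hAx.sub_const b).add hs
  have h2 : Filter.Tendsto (fun j => r (φ (ψ j))) Filter.atTop (nhds 0) := by
    rw [tendsto_zero_iff_norm_tendsto_zero]
    exact hpart1.comp hψ.tendsto_atTop
  exact tendsto_nhds_unique h1 h2
end
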